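/- If E is a trace-preserving positive linear map on operators over a finite-dimensional complex Hilbert space (in particular, a trace-preserving super-operator given by Kraus operators with Σ_i E_i†E_i = I), then the trace distance is non-increasing: D(E(ρ), E(σ)) ≤ D(ρ, σ) for all density operators ρ, σ. -/

import Mathlib

open Matrix
open scoped ComplexOrder

/-- `|A| = √(AᴴA)`. -/
noncomputable def matAbs {ι : Type*} [Fintype ι] [DecidableEq ι]
    (A : Matrix ι ι ℂ) : Matrix ι ι ℂ :=
  (Matrix.posSemidef_conjTranspose_mul_self A).1.eigenvectorUnitary.1 *
    diagonal ((↑) ∘ (√·) ∘ (Matrix.posSemidef_conjTranspose_mul_self A).1.eigenvalues) *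
    (star (Matrix.posSemidef_conjTranspose_mul_self A).1.eigenvectorUnitary : Matrix ι ι ℂ)

/-- Trace distance `D(ρ,σ) = (1/2) tr|ρ-σ|`. -/
noncomputable def traceDist {ι : Type*} [Fintype ι] [DecidableEq ι]
    (ρ σ : Matrix ι ι ℂ) : ℝ :=
  (1 / 2) * ((matAbs (ρ - σ)).trace).re

/-!
Write `ρ - σ = P - Q` with `P, Q` its positive and negative parts, so that
`tr |ρ - σ| = tr P + tr Q`. Then `E ρ - E σ = E P - E Q` with `E P, E Q ≥ 0`, and for any
`X, Y ≥ 0` we have `tr |X - Y| = tr (S (X - Y)) ≤ tr X + tr Y`, where `S` is the sign of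
`X - Y`, so that `-1 ≤ S ≤ 1`. As `E` preserves traces, `tr (E P) + tr (E Q) = tr |ρ - σ|`.
-/

open scoped MatrixOrder

namespace Matrix

variable {ι κ : Type*} [Fintype ι] [Fintype κ]

theorem PosSemidef.trace_mul_nonneg {𝕜 : Type*} [RCLike 𝕜] {X Y : Matrix ι ι 𝕜}
    (hX : X.PosSemidef) (hY : Y.PosSemidef) : 0 ≤ (X * Y).trace := by
  classical
  obtain ⟨B, rfl⟩ := CStarAlgebra.nonneg_iff_eq_star_mul_self.mp hY.nonneg
  rw [star_eq_conjTranspose, ← Matrix.mul_assoc, trace_mul_comm, ← Matrix.mul_assoc]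
  exact (hX.mul_mul_conjTranspose_same B).trace_nonneg

variable [DecidableEq ι] [DecidableEq κ]

theorem matAbs_eq_cfcAbs (A : Matrix ι ι ℂ) : matAbs A = CFC.abs A := by
  have hAA := posSemidef_conjTranspose_mul_self A
  rw [CFC.abs, star_eq_conjTranspose, CFC.sqrt_eq_real_sqrt _ hAA.nonneg,
    cfcₙ_eq_cfc (hf0 := Real.sqrt_zero), hAA.1.cfc_eq]
  rfl

theorem IsHermitian.exists_mul_eq_cfcAbs {A : Matrix ι ι ℂ} (hA : A.IsHermitian) :
    ∃ S : Matrix ι ι ℂ, (1 - S).PosSemidef ∧ (1 + S).PosSemidef ∧ S * A = CFC.abs A := by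
  set sign : ℝ → ℝ := fun x => if 0 ≤ x then 1 else -1
  -- `S` is the sign of `A`: the spectrum is finite, so the discontinuous `sign` is admissible.
  have hcont (f : ℝ → ℝ) : ContinuousOn f (spectrum ℝ A) := A.finite_real_spectrum.continuousOn f
  refine ⟨cfc sign A, ?_, ?_, ?_⟩
  · rw [← nonneg_iff_posSemidef, ← cfc_one ℝ A, ← cfc_sub _ _ _ (hcont _) (hcont _)]
    refine cfc_nonneg fun x _ => ?_
    simp only [Pi.one_apply, sign]
    split_ifs <;> norm_num
  · rw [← nonneg_iff_posSemidef, ← cfc_one ℝ A, ← cfc_add _ _ _ (hcont _) (hcont _)]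
    refine cfc_nonneg fun x _ => ?_
    simp only [Pi.one_apply, sign]
    split_ifs <;> norm_num
  · conv_lhs => arg 2; rw [← cfc_id' ℝ A]
    rw [← cfc_mul _ _ _ (hcont _) (hcont _), CFC.abs_eq_cfc_norm A]
    refine cfc_congr fun x _ => ?_
    simp only [sign, Real.norm_eq_abs]
    split_ifs with h
    · simp [abs_of_nonneg h]
    · simp [abs_of_neg (not_le.mp h)]

theorem trace_cfcAbs_sub_le {X Y : Matrix ι ι ℂ} (hX : X.PosSemidef) (hY : Y.PosSemidef) :
    (CFC.abs (X - Y)).trace ≤ X.trace + Y.trace := by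
  obtain ⟨S, hS₁, hS₂, hSA⟩ := (hX.1.sub hY.1).exists_mul_eq_cfcAbs
  have hX' : 0 ≤ X.trace - (S * X).trace := by
    simpa [Matrix.sub_mul, trace_sub] using hS₁.trace_mul_nonneg hX
  have hY' : 0 ≤ Y.trace + (S * Y).trace := by
    simpa [Matrix.add_mul, trace_add] using hS₂.trace_mul_nonneg hY
  rw [← hSA, Matrix.mul_sub, trace_sub, ← sub_nonneg]
  convert add_nonneg hX' hY' using 1
  ring

theorem IsHermitian.trace_cfcAbs_map_le {A : Matrix ι ι ℂ} (hA : A.IsHermitian)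
    (E : Matrix ι ι ℂ →ₗ[ℂ] Matrix κ κ ℂ)
    (hpos : ∀ X : Matrix ι ι ℂ, X.PosSemidef → (E X).PosSemidef)
    (htp : ∀ X : Matrix ι ι ℂ, (E X).trace = X.trace) :
    (CFC.abs (E A)).trace ≤ (CFC.abs A).trace := by
  have hEA : E A = E A⁺ - E A⁻ := by rw [← map_sub, CFC.posPart_sub_negPart A hA.isSelfAdjoint]
  calc (CFC.abs (E A)).trace
      ≤ (E A⁺).trace + (E A⁻).trace :=
        hEA ▸ trace_cfcAbs_sub_le (hpos _ (CFC.posPart_nonneg A).posSemidef)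
          (hpos _ (CFC.negPart_nonneg A).posSemidef)
    _ = (CFC.abs A).trace := by
        rw [htp, htp, ← trace_add, CFC.posPart_add_negPart A hA.isSelfAdjoint]

end Matrix

/-- A trace-preserving positive linear map does not increase the trace distance
between density operators. -/
theorem traceDist_nonincreasing_under_tp_positive_map {n : ℕ}
    (E : Matrix (Fin n) (Fin n) ℂ →ₗ[ℂ] Matrix (Fin n) (Fin n) ℂ)
    (hpos : ∀ A : Matrix (Fin n) (Fin n) ℂ, A.PosSemidef → (E A).PosSemidef)
    (htp : ∀ A : Matrix (Fin n) (Fin n) ℂ, (E A).trace = A.trace)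
    (ρ σ : Matrix (Fin n) (Fin n) ℂ)
    (hρ : ρ.PosSemidef ∧ ρ.trace = 1) (hσ : σ.PosSemidef ∧ σ.trace = 1) :
    traceDist (E ρ) (E σ) ≤ traceDist ρ σ := by
  have h := (hρ.1.1.sub hσ.1.1).trace_cfcAbs_map_le E hpos htp
  rw [map_sub] at h
  simp only [traceDist, matAbs_eq_cfcAbs]
  exact mul_le_mul_of_nonneg_left h.1 (by norm_num)
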